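/- arXiv:1705.08607 — 10 statements merged into one kernel-verified Lean document; each statement's English description precedes it below -/
import Mathlib

section
/- For all positive integers p and q with p < q and gcd(p,q) = 1, there exists a unique finite sequence (i₁,…,iₙ) with each iₖ ∈ {0,1} (n ≥ 0, the empty sequence corresponding to (p,q) = (1,2)) such that the matrix product K_{i₁}·K_{i₂}·⋯·K_{iₙ} applied to the column vector (1,2)ᵀ equals the column vector (p,q)ᵀ. (Every reduced fraction p/q in (0,1) occurs exactly once in Kepler's tree of harmonic fractions.) -/
/-- A morphism of the free monoid `{0,1}*`, determined by the images of the two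
letters (`false` encodes the letter 0, `true` encodes the letter 1). -/
abbrev Morph := Bool → List Bool

/-- The identity morphism. -/
def idm : Morph := fun a => [a]

/-- Composition of morphisms: `(M σ τ)(a) = σ(τ(a))`. -/
def M (σ τ : Morph) : Morph := fun a => (τ a).flatMap σ

/-- `compAll g [i₁, …, iₙ] = g i₁ ∘ g i₂ ∘ ⋯ ∘ g iₙ` (the identity for `n = 0`). -/
def compAll (g : Bool → Morph) (l : List Bool) : Morph :=
  l.foldr (fun i acc => M (g i) acc) idm

/-- Iterated composition of a morphism with itself. -/
def mpow (σ : Morph) : ℕ → Morph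
  | 0 => idm
  | k + 1 => M σ (mpow σ k)

/-- The length-`n` prefix of an infinite word. -/
def wpref (w : ℕ → Bool) (n : ℕ) : List Bool := (List.range n).map w

/-- `σ` fixes the infinite word `w`: for every `n`, the finite word
`σ(w(0))σ(w(1))⋯σ(w(n-1))` is a prefix of `w`. -/
def Fixes (σ : Morph) (w : ℕ → Bool) : Prop :=
  ∀ n : ℕ, (wpref w n).flatMap σ = wpref w ((wpref w n).flatMap σ).length

/-- The integer value `⌊(n+1)α + ρ⌋ - ⌊nα + ρ⌋` of the Sturmian word `s_{α,ρ}`. -/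
noncomputable def sfl (α ρ : ℝ) (n : ℕ) : ℤ :=
  ⌊((n : ℝ) + 1) * α + ρ⌋ - ⌊(n : ℝ) * α + ρ⌋

/-- The integer value `⌈(n+1)α + ρ⌉ - ⌈nα + ρ⌉` of the Sturmian word `s'_{α,ρ}`. -/
noncomputable def scl (α ρ : ℝ) (n : ℕ) : ℤ :=
  ⌈((n : ℝ) + 1) * α + ρ⌉ - ⌈(n : ℝ) * α + ρ⌉

/-- The Sturmian word `s_{α,ρ}` as an infinite binary word. -/
noncomputable def sw (α ρ : ℝ) : ℕ → Bool := fun n => decide (sfl α ρ n = 1)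

/-- The Sturmian word `s'_{α,ρ}` as an infinite binary word. -/
noncomputable def sw' (α ρ : ℝ) : ℕ → Bool := fun n => decide (scl α ρ n = 1)

/-- The characteristic word `c_α = s_{α,α}`. -/
noncomputable def cw (α : ℝ) : ℕ → Bool := sw α α

/-- `ψ₁ : 0 → 01, 1 → 0` (the Fibonacci morphism, `φ₁`). -/
def psi1 : Morph := fun a => match a with | false => [false, true] | true => [false]

/-- `ψ₃ : 0 → 0, 1 → 01` (the morphism `G`, i.e. `φ₀`). -/
def psi3 : Morph := fun a => match a with | false => [false] | true => [false, true]

/-- `ψ₄ : 0 → 0, 1 → 10`. -/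
def psi4 : Morph := fun a => match a with | false => [false] | true => [true, false]

/-- `ψ₇ : 0 → 10, 1 → 1`. -/
def psi7 : Morph := fun a => match a with | false => [true, false] | true => [true]

/-- `ψ₈ : 0 → 01, 1 → 1`. -/
def psi8 : Morph := fun a => match a with | false => [false, true] | true => [true]

/-- Time reversal of a morphism. -/
def trev (σ : Morph) : Morph := fun a => (σ a).reverse

/-- The exchange morphism `E : 0 → 1, 1 → 0`. -/
def Em : Morph := fun a => [!a]

/-- Generators `φ₀, φ₁` indexed by a bit: `false ↦ φ₀ (= ψ₃)`, `true ↦ φ₁ (= ψ₁)`. -/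
def phiGen : Bool → Morph := fun b => match b with | false => psi3 | true => psi1

/-- Generators of `⟨ψ₁, ψ₃⟩`: `false` encodes the index 1 (`ψ₁`),
`true` encodes the index 3 (`ψ₃`). -/
def g13 : Bool → Morph := fun b => match b with | false => psi1 | true => psi3

/-- Generators of `⟨ψ₃, ψ₈⟩`: `false ↦ ψ₃`, `true ↦ ψ₈`. -/
def g38 : Bool → Morph := fun b => match b with | false => psi3 | true => psi8

/-- Generators of `⟨ψ₄, ψ₇⟩`: `false ↦ ψ₄`, `true ↦ ψ₇`. -/
def g47 : Bool → Morph := fun b => match b with | false => psi4 | true => psi7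

/-- The Kepler matrices `K₀ = [[1,0],[1,1]]` and `K₁ = [[0,1],[1,1]]`. -/
def K : Bool → Matrix (Fin 2) (Fin 2) ℕ
  | false => !![1, 0; 1, 1]
  | true => !![0, 1; 1, 1]

/-- Pair form of the Kepler action on `(1,2)`. -/
def kf : List Bool → ℕ × ℕ
  | [] => (1, 2)
  | i :: l => ((if i then (kf l).2 else (kf l).1), (kf l).1 + (kf l).2)

lemma kf_inv : ∀ l : List Bool,
    0 < (kf l).1 ∧ (kf l).1 < (kf l).2 ∧ Nat.gcd (kf l).1 (kf l).2 = 1 := by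
  intro l
  induction l with
  | nil => simp [kf]
  | cons i l ih =>
    obtain ⟨h1, h2, h3⟩ := ih
    cases i <;> simp [kf] <;>
      refine ⟨by omega, by omega, ?_⟩
    · exact h3
    · rw [Nat.gcd_comm]; exact h3

lemma kf_val : ∀ l : List Bool,
    ((l.map K).prod).mulVec ![1, 2] = ![(kf l).1, (kf l).2] := by
  intro l
  induction l with
  | nil => funext i; fin_cases i <;> simp [kf]
  | cons i l ih =>
    rw [List.map_cons, List.prod_cons, ← Matrix.mulVec_mulVec, ih]
    cases i <;> funext j <;> fin_cases j <;>
      simp [K, kf, Matrix.mulVec, dotProduct, Fin.sum_univ_two]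

lemma kf_unique : ∀ q p : ℕ, 0 < p → p < q → Nat.gcd p q = 1 →
    ∃! l : List Bool, kf l = (p, q) := by
  intro q
  induction q using Nat.strong_induction_on with
  | _ q ih =>
    intro p hp hpq hgcd
    by_cases hbase : p = 1 ∧ q = 2
    · refine ⟨[], by simp [kf, hbase.1, hbase.2], ?_⟩
      rintro (_ | ⟨i, l⟩) h
      · rfl
      · exfalso
        obtain ⟨h1, h2, _⟩ := kf_inv l
        have : (kf (i :: l)).2 = q := by rw [h]
        simp [kf] at this
        omega
    · -- q ≥ 3 and 2p ≠ q
      have hq2 : q ≠ 2 := by rintro rfl; omega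
      have h2p : 2 * p ≠ q := by
        intro h
        have : Nat.gcd p q = p := by rw [← h]; exact Nat.gcd_eq_left ⟨2, by ring⟩
        omega
      rcases lt_or_gt_of_ne h2p with hlt | hgt
      · -- first letter false, parent (p, q - p)
        have hgcd' : Nat.gcd p (q - p) = 1 := by
          rwa [Nat.gcd_sub_self_right (le_of_lt hpq)]
        obtain ⟨t, ht, htu⟩ := ih (q - p) (by omega) p hp (by omega) hgcd'
        refine ⟨false :: t, ?_, ?_⟩
        · simp [kf, ht]; omega
        · rintro (_ | ⟨i, l⟩) h
          · exfalso; simp [kf, Prod.ext_iff] at h; omega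
          · obtain ⟨h1, h2, _⟩ := kf_inv l
            simp [kf, Prod.ext_iff] at h
            cases i with
            | true => exfalso; simp at h; omega
            | false =>
              simp at h
              have : kf l = (p, q - p) := by
                have := h.1; have := h.2
                ext <;> simp <;> omega
              rw [htu l this]
      · -- first letter true, parent (q - p, p)
        have hgcd' : Nat.gcd (q - p) p = 1 := by
          rw [Nat.gcd_comm, Nat.gcd_sub_self_right (le_of_lt hpq)]
          exact hgcd
        obtain ⟨t, ht, htu⟩ := ih p hpq (q - p) (by omega) (by omega) hgcd'
        refine ⟨true :: t, ?_, ?_⟩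
        · simp [kf, ht]; omega
        · rintro (_ | ⟨i, l⟩) h
          · exfalso; simp [kf, Prod.ext_iff] at h; omega
          · obtain ⟨h1, h2, _⟩ := kf_inv l
            simp [kf, Prod.ext_iff] at h
            cases i with
            | false => exfalso; simp at h; omega
            | true =>
              simp at h
              have : kf l = (q - p, p) := by ext <;> simp <;> omega
              rw [htu l this]

/-- Every reduced fraction `p/q ∈ (0,1)` occurs exactly once in
Kepler's tree of harmonic fractions: there is a unique sequence of bits
`i₁ … iₙ` such that `K_{i₁} ⋯ K_{iₙ} (1,2)ᵀ = (p,q)ᵀ`. -/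
theorem kepler_tree_unique (p q : ℕ) (hp : 0 < p) (hpq : p < q) (hgcd : Nat.gcd p q = 1) :
    ∃! l : List Bool, ((l.map K).prod).mulVec ![1, 2] = ![p, q] := by
  have hiff : ∀ l : List Bool,
      ((l.map K).prod).mulVec ![1, 2] = ![p, q] ↔ kf l = (p, q) := by
    intro l
    rw [kf_val]
    constructor
    · intro h
      have h0 := congrFun h 0
      have h1 := congrFun h 1
      simp at h0 h1
      ext <;> simp [h0, h1]
    · rintro h; rw [h]
  obtain ⟨l, hl, hu⟩ := kf_unique q p hp hpq hgcd
  exact ⟨l, (hiff l).mpr hl, fun l' h' => hu l' ((hiff l').mp h')⟩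
end

section
/- The monoid of matrices generated by the Kepler matrices K₀ and K₁ is free: the map sending a finite sequence (i₁,…,iₙ) with each iₖ ∈ {0,1} to the matrix product K_{i₁}·K_{i₂}·⋯·K_{iₙ} is injective (in particular, if K_{i₁}⋯K_{iₘ} = K_{j₁}⋯K_{jₙ} then m = n and iₖ = jₖ for all k). -/

lemma kepler_col_pos (l : List Bool) :
    1 ≤ (l.map K).prod 0 0 + (l.map K).prod 1 0 ∧
    1 ≤ (l.map K).prod 0 1 + (l.map K).prod 1 1 := by
  induction l with
  | nil => simp [Matrix.one_apply]
  | cons b l ih =>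
    simp only [List.map_cons, List.prod_cons]
    cases b <;>
      simp [K, Matrix.mul_apply, Fin.sum_univ_two] <;> omega

lemma kepler_sum_lt_false (l : List Bool) :
    ((l ++ [false]).map K).prod 0 1 + ((l ++ [false]).map K).prod 1 1 <
      ((l ++ [false]).map K).prod 0 0 + ((l ++ [false]).map K).prod 1 0 := by
  have hp := kepler_col_pos l
  have h : ((l ++ [false]).map K).prod = (l.map K).prod * K false := by simp
  rw [h]
  simp [K, Matrix.mul_apply, Fin.sum_univ_two]
  omega

lemma kepler_sum_lt_true (l : List Bool) :
    ((l ++ [true]).map K).prod 0 0 + ((l ++ [true]).map K).prod 1 0 <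
      ((l ++ [true]).map K).prod 0 1 + ((l ++ [true]).map K).prod 1 1 := by
  have hp := kepler_col_pos l
  have h : ((l ++ [true]).map K).prod = (l.map K).prod * K true := by simp
  rw [h]
  simp [K, Matrix.mul_apply, Fin.sum_univ_two]
  omega

lemma kepler_cancel (P Q : Matrix (Fin 2) (Fin 2) ℕ) (b : Bool)
    (h : P * K b = Q * K b) : P = Q := by
  ext i j
  have e0 : (P * K b) i 0 = (Q * K b) i 0 := by rw [h]
  have e1 : (P * K b) i 1 = (Q * K b) i 1 := by rw [h]
  cases b <;> simp [K, Matrix.mul_apply, Fin.sum_univ_two] at e0 e1 <;>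
    fin_cases j <;> simp <;> omega

/-- The monoid generated by the Kepler matrices `K₀` and `K₁`
is free: the map `(i₁, …, iₙ) ↦ K_{i₁} ⋯ K_{iₙ}` is injective. -/
theorem kepler_monoid_free :
    ∀ l₁ l₂ : List Bool, (l₁.map K).prod = (l₂.map K).prod → l₁ = l₂ := by
  intro l₁
  induction l₁ using List.reverseRecOn with
  | nil =>
    intro l₂ h
    cases l₂ using List.reverseRecOn with
    | nil => rfl
    | append_singleton l b =>
      exfalso
      simp only [List.map_nil, List.prod_nil] at h
      cases b
      · have hs := kepler_sum_lt_false l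
        rw [← h] at hs
        simp [Matrix.one_apply] at hs
      · have hs := kepler_sum_lt_true l
        rw [← h] at hs
        simp [Matrix.one_apply] at hs
  | append_singleton l₁ b₁ ih =>
    intro l₂ h
    cases l₂ using List.reverseRecOn with
    | nil =>
      exfalso
      simp only [List.map_nil, List.prod_nil] at h
      cases b₁
      · have hs := kepler_sum_lt_false l₁
        rw [h] at hs
        simp [Matrix.one_apply] at hs
      · have hs := kepler_sum_lt_true l₁
        rw [h] at hs
        simp [Matrix.one_apply] at hs
    | append_singleton l₂ b₂ =>
      have hb : b₁ = b₂ := by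
        cases b₁ <;> cases b₂ <;> try rfl
        · exfalso
          have h1 := kepler_sum_lt_false l₁
          have h2 := kepler_sum_lt_true l₂
          rw [h] at h1
          omega
        · exfalso
          have h1 := kepler_sum_lt_true l₁
          have h2 := kepler_sum_lt_false l₂
          rw [h] at h1
          omega
      subst hb
      have hP : (l₁.map K).prod * K b₁ = (l₂.map K).prod * K b₁ := by
        have e1 : ((l₁ ++ [b₁]).map K).prod = (l₁.map K).prod * K b₁ := by simp
        have e2 : ((l₂ ++ [b₁]).map K).prod = (l₂.map K).prod * K b₁ := by simp
        rw [← e1, ← e2, h]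
      have := kepler_cancel _ _ _ hP
      rw [ih _ this]
end

section
/- The monoid of morphisms generated by φ₀ and φ₁ under composition is free: if φ_{i₁}∘φ_{i₂}∘⋯∘φ_{iₘ} and φ_{j₁}∘φ_{j₂}∘⋯∘φ_{jₙ} (with all iₖ, jₖ ∈ {0,1}) are equal as morphisms, i.e., they send the letter 0 to the same word and the letter 1 to the same word, then m = n and iₖ = jₖ for all k. -/
/-- Every image under a generator flatMap starts with `false`. -/
lemma headFalse (b : Bool) : ∀ w : List Bool, ∀ x r, w.flatMap (phiGen b) = x :: r → x = false := by
  intro w x r h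
  cases w with
  | nil => simp at h
  | cons a w' =>
    cases b <;> cases a <;>
      simp only [phiGen, psi1, psi3, List.flatMap_cons, List.cons_append, List.nil_append] at h <;>
      exact (List.cons.injEq _ _ _ _ ▸ h).1.symm

/-- `compAll phiGen l a` is never empty. -/
lemma compAll_ne_nil : ∀ (l : List Bool) (a : Bool), compAll phiGen l a ≠ [] := by
  intro l
  induction l with
  | nil => intro a; simp [compAll, idm]
  | cons i l ih =>
    intro a
    show (compAll phiGen l a).flatMap (phiGen i) ≠ []
    rcases hx : compAll phiGen l a with _ | ⟨x, r⟩
    · exact absurd hx (ih a)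
    · cases i <;> cases x <;> simp [phiGen, psi1, psi3]

/-- `compAll phiGen l false` starts with `false`. -/
lemma compAll_head : ∀ (l : List Bool), ∃ w, compAll phiGen l false = false :: w := by
  intro l
  cases l with
  | nil => exact ⟨[], rfl⟩
  | cons i l' =>
    rcases hx : compAll phiGen (i :: l') false with _ | ⟨x, r⟩
    · exact absurd hx (compAll_ne_nil _ _)
    · have hf := headFalse i (compAll phiGen l' false) x r hx
      subst hf
      exact ⟨r, rfl⟩

/-- Generators are injective on words. -/
lemma cancel (b : Bool) : ∀ w1 w2 : List Bool,
    w1.flatMap (phiGen b) = w2.flatMap (phiGen b) → w1 = w2 := by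
  intro w1
  induction w1 with
  | nil =>
    intro w2 h
    cases w2 with
    | nil => rfl
    | cons c w2' =>
      exfalso
      cases b <;> cases c <;> simp [phiGen, psi1, psi3] at h
  | cons a w1' ih =>
    intro w2 h
    cases w2 with
    | nil =>
      exfalso
      cases b <;> cases a <;> simp [phiGen, psi1, psi3] at h
    | cons c w2' =>
      by_cases hac : a = c
      · subst hac
        have h2 : w1'.flatMap (phiGen b) = w2'.flatMap (phiGen b) := by
          cases b <;> cases a <;> simpa [phiGen, psi1, psi3] using h
        rw [ih _ h2]
      · exfalso
        cases b <;> cases a <;> cases c <;> simp at hac <;>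
          simp only [phiGen, psi1, psi3, List.flatMap_cons, List.cons_append,
            List.nil_append, List.cons.injEq, true_and] at h
        · -- psi3 : [false]++X = [false,true]++Y, so X = true::Y
          rcases hx : w1'.flatMap psi3 with _ | ⟨x, r⟩
          · rw [hx] at h; simp at h
          · have := headFalse false w1' x r hx
            rw [hx] at h
            simp_all
        · rcases hx : w2'.flatMap psi3 with _ | ⟨x, r⟩
          · rw [hx] at h; simp at h
          · have := headFalse false w2' x r hx
            rw [hx] at h
            simp_all
        · rcases hx : w2'.flatMap psi1 with _ | ⟨x, r⟩
          · rw [hx] at h; simp at h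
          · have := headFalse true w2' x r hx
            rw [hx] at h
            simp_all
        · rcases hx : w1'.flatMap psi1 with _ | ⟨x, r⟩
          · rw [hx] at h; simp at h
          · have := headFalse true w1' x r hx
            rw [hx] at h
            simp_all

/-- Decoding a word that is simultaneously a `psi3`-image and a `psi1`-image. -/
lemma decode13 : ∀ w1 w2 : List Bool,
    w1.flatMap psi3 = w2.flatMap psi1 → w2 = w1.map (!·) := by
  intro w1
  induction w1 with
  | nil =>
    intro w2 h
    cases w2 with
    | nil => rfl
    | cons c w2' => exfalso; cases c <;> simp [psi1] at h
  | cons a w1' ih =>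
    intro w2 h
    cases w2 with
    | nil => exfalso; cases a <;> simp [psi3] at h
    | cons c w2' =>
      cases a <;> cases c <;>
        simp only [psi1, psi3, List.flatMap_cons, List.cons_append,
          List.nil_append, List.cons.injEq, true_and] at h
      · -- a=false,c=false : X = true :: Y, contradiction
        exfalso
        rcases hx : w1'.flatMap psi3 with _ | ⟨x, r⟩
        · rw [hx] at h; simp at h
        · have := headFalse false w1' x r hx
          rw [hx] at h
          simp_all
      · -- a=false,c=true : [false]++X = [false]++Y
        have : w2' = w1'.map (!·) := ih _ h
        simp [this]
      · -- a=true,c=false : [false,true]++X = [false,true]++Y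
        have : w2' = w1'.map (!·) := ih _ h
        simp [this]
      · -- a=true,c=true : Y = true :: X, contradiction
        exfalso
        rcases hx : w2'.flatMap psi1 with _ | ⟨x, r⟩
        · rw [hx] at h; simp at h
        · have := headFalse true w2' x r hx
          rw [hx] at h
          simp_all

lemma compAll_cons (i : Bool) (l : List Bool) :
    compAll phiGen (i :: l) = M (phiGen i) (compAll phiGen l) := rfl

/-- The monoid of morphisms generated by `φ₀` and `φ₁` under
composition is free: if `φ_{i₁} ∘ ⋯ ∘ φ_{iₘ} = φ_{j₁} ∘ ⋯ ∘ φ_{jₙ}` as morphisms,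
then `m = n` and `iₖ = jₖ` for all `k`. -/
theorem phi_monoid_free :
    ∀ l₁ l₂ : List Bool, compAll phiGen l₁ = compAll phiGen l₂ → l₁ = l₂ := by
  intro l₁
  induction l₁ with
  | nil =>
    intro l₂ h
    cases l₂ with
    | nil => rfl
    | cons j l₂' =>
      exfalso
      have h' : ([true] : List Bool) = (compAll phiGen l₂' true).flatMap (phiGen j) :=
        congrFun h true
      rcases hx : compAll phiGen l₂' true with _ | ⟨x, r⟩
      · exact compAll_ne_nil l₂' true hx
      · rw [hx, List.flatMap_cons] at h'
        cases j <;> cases x <;> simp [phiGen, psi1, psi3] at h'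
  | cons i l₁' ih =>
    intro l₂ h
    cases l₂ with
    | nil =>
      exfalso
      have h' : (compAll phiGen l₁' true).flatMap (phiGen i) = ([true] : List Bool) :=
        congrFun h true
      rcases hx : compAll phiGen l₁' true with _ | ⟨x, r⟩
      · exact compAll_ne_nil l₁' true hx
      · rw [hx, List.flatMap_cons] at h'
        cases i <;> cases x <;> simp [phiGen, psi1, psi3] at h'
    | cons j l₂' =>
      have key : ∀ a, (compAll phiGen l₁' a).flatMap (phiGen i)
          = (compAll phiGen l₂' a).flatMap (phiGen j) := fun a => congrFun h a
      have hij : i = j := by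
        by_contra hne
        obtain ⟨w1, hw1⟩ := compAll_head l₁'
        obtain ⟨w2, hw2⟩ := compAll_head l₂'
        have h13 : (compAll phiGen l₂' false) = (compAll phiGen l₁' false).map (!·) ∨
            (compAll phiGen l₁' false) = (compAll phiGen l₂' false).map (!·) := by
          cases i <;> cases j
          · exact absurd rfl hne
          · exact Or.inl (decode13 _ _ (key false))
          · exact Or.inr (decode13 _ _ (key false).symm)
          · exact absurd rfl hne
        rcases h13 with hd | hd
        · rw [hw1, hw2] at hd; simp at hd
        · rw [hw1, hw2] at hd; simp at hd
      subst hij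
      have hst : compAll phiGen l₁' = compAll phiGen l₂' := by
        funext a
        exact cancel i _ _ (key a)
      rw [ih _ hst]
end

section
/- Let α be an irrational quadratic number with 0 < α < 1, say α² = bα + c with b, c ∈ ℚ, and let ᾱ = b − α be its algebraic conjugate. Let ρ = u + vα with u, v ∈ ℚ and 0 ≤ ρ ≤ 1, and set ρ̄ = u + vᾱ. Assume Yasutomi's condition: either (ᾱ > 1 and 1 − ᾱ ≤ ρ̄ ≤ ᾱ) or (ᾱ < 0 and ᾱ ≤ ρ̄ ≤ 1 − ᾱ). Then for every integer m with m ≥ 2, the number mα + ρ is not an integer. (For substitution invariant lozenge pairs the lozenge index m_◇ is 0 or 1.) -/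
/-- For an irrational quadratic `α ∈ (0,1)` with `α² = bα + c`
(`b, c ∈ ℚ`), conjugate `ᾱ = b - α`, and `ρ = u + vα ∈ [0,1]` (`u, v ∈ ℚ`) with
conjugate `ρ̄ = u + vᾱ` satisfying Yasutomi's condition, for every integer
`m ≥ 2` the number `mα + ρ` is not an integer (so for substitution invariant
lozenge pairs `m_◇ = 0` or `m_◇ = 1`). -/
theorem lozenge_index_le_one (α : ℝ) (hirr : Irrational α) (h0 : 0 < α) (h1 : α < 1)
    (b c : ℚ) (hquad : α ^ 2 = (b : ℝ) * α + (c : ℝ))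
    (u v : ℚ) (hρ0 : 0 ≤ (u : ℝ) + (v : ℝ) * α) (hρ1 : (u : ℝ) + (v : ℝ) * α ≤ 1)
    (hyas :
      (1 < (b : ℝ) - α ∧ 1 - ((b : ℝ) - α) ≤ (u : ℝ) + (v : ℝ) * ((b : ℝ) - α) ∧
        (u : ℝ) + (v : ℝ) * ((b : ℝ) - α) ≤ (b : ℝ) - α) ∨
      ((b : ℝ) - α < 0 ∧ (b : ℝ) - α ≤ (u : ℝ) + (v : ℝ) * ((b : ℝ) - α) ∧
        (u : ℝ) + (v : ℝ) * ((b : ℝ) - α) ≤ 1 - ((b : ℝ) - α))) :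
    ∀ m : ℤ, 2 ≤ m → ∀ k : ℤ, (m : ℝ) * α + ((u : ℝ) + (v : ℝ) * α) ≠ (k : ℝ) := by
  intro m hm k heq
  by_cases h : (m : ℚ) + v = 0
  · -- v = -m, u = k
    have hv : (v : ℝ) = -(m : ℝ) := by
      have : (v : ℚ) = -(m : ℚ) := by linarith
      exact_mod_cast this
    have hu : (u : ℝ) = (k : ℝ) := by
      rw [hv] at heq; linarith
    have hm' : (2 : ℝ) ≤ (m : ℝ) := by exact_mod_cast hm
    rw [hv, hu] at hρ0 hρ1 hyas
    rcases hyas with ⟨hA, hL, _⟩ | ⟨hA, _, hR⟩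
    · -- ᾱ > 1 : k > m and k < m + 1
      have hk1 : (m : ℝ) < (k : ℝ) := by nlinarith
      have hk2 : (k : ℝ) < (m : ℝ) + 1 := by nlinarith
      have : m + 1 ≤ k := by
        have : m < k := by exact_mod_cast hk1
        omega
      have : ((m : ℝ)) + 1 ≤ (k : ℝ) := by exact_mod_cast this
      linarith
    · -- ᾱ < 0 : 0 < k < 1
      have hk1 : (0 : ℝ) < (k : ℝ) := by nlinarith
      have hk2 : (k : ℝ) < 1 := by nlinarith
      have h1k : (1 : ℤ) ≤ k := by
        have : (0 : ℤ) < k := by exact_mod_cast hk1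
        omega
      have : (1 : ℝ) ≤ (k : ℝ) := by exact_mod_cast h1k
      linarith
  · -- α would be rational
    exact hirr ⟨((k : ℚ) - u) / ((m : ℚ) + v), by
      have hne : ((m : ℝ) + (v : ℝ)) ≠ 0 := by exact_mod_cast h
      push_cast
      rw [div_eq_iff hne]
      linear_combination -heq⟩
end

section
/- For every morphism ψ in the monoid ⟨ψ₁,ψ₃⟩, the finite words 01·ψ(ψ(0)) and 10·ψ(ψ(1)) are palindromes (each equals its own reversal). -/
/-- Auxiliary: a per-letter reversal relation extends to all words. -/
lemma wordRel {σ : Morph} {p : List Bool}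
    (h : ∀ a, p ++ (σ a).reverse = σ a ++ p) :
    ∀ w : List Bool, p ++ (w.flatMap σ).reverse = w.reverse.flatMap σ ++ p := by
  intro w
  induction w with
  | nil => simp
  | cons a w ih =>
    simp only [List.flatMap_cons, List.reverse_append, List.reverse_cons,
      List.flatMap_append, List.flatMap_cons, List.flatMap_nil]
    calc p ++ ((w.flatMap σ).reverse ++ (σ a).reverse)
        = (p ++ (w.flatMap σ).reverse) ++ (σ a).reverse := by
          simp [List.append_assoc]
      _ = (w.reverse.flatMap σ ++ p) ++ (σ a).reverse := by rw [ih]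
      _ = w.reverse.flatMap σ ++ (p ++ (σ a).reverse) := by
          simp [List.append_assoc]
      _ = w.reverse.flatMap σ ++ (σ a ++ p) := by rw [h a]
      _ = w.reverse.flatMap σ ++ (σ a ++ []) ++ p := by
          simp [List.append_assoc]

/-- The invariant maintained along the monoid `⟨ψ₁, ψ₃⟩`. -/
def PsiInv (ψ : Morph) : Prop :=
  ∃ r : List Bool,
    (∀ a, r ++ (ψ a).reverse = ψ a ++ r) ∧
    ((ψ false ++ ψ true = r ++ [false, true] ∧
        ψ true ++ ψ false = r ++ [true, false]) ∨
     (ψ false ++ ψ true = r ++ [true, false] ∧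
        ψ true ++ ψ false = r ++ [false, true]))

lemma inv_id : PsiInv idm := by
  refine ⟨[], ?_, Or.inl ⟨rfl, rfl⟩⟩
  intro a; cases a <;> rfl

lemma inv_step {σ ψ : Morph}
    (h1 : ∀ a, [false] ++ (σ a).reverse = σ a ++ [false])
    (h2 : (σ false ++ σ true = [false] ++ [false, true] ∧
             σ true ++ σ false = [false] ++ [true, false]) ∨
          (σ false ++ σ true = [false] ++ [true, false] ∧
             σ true ++ σ false = [false] ++ [false, true]))
    (hψ : PsiInv ψ) : PsiInv (M σ ψ) := by
  obtain ⟨r, hr, hp⟩ := hψ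
  refine ⟨r.flatMap σ ++ [false], ?_, ?_⟩
  · intro a
    show (r.flatMap σ ++ [false]) ++ ((ψ a).flatMap σ).reverse
        = (ψ a).flatMap σ ++ (r.flatMap σ ++ [false])
    calc (r.flatMap σ ++ [false]) ++ ((ψ a).flatMap σ).reverse
        = r.flatMap σ ++ ([false] ++ ((ψ a).flatMap σ).reverse) := by
          simp [List.append_assoc]
      _ = r.flatMap σ ++ ((ψ a).reverse.flatMap σ ++ [false]) := by
          rw [wordRel h1 (ψ a)]
      _ = (r ++ (ψ a).reverse).flatMap σ ++ [false] := by
          simp [List.flatMap_append, List.append_assoc]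
      _ = (ψ a ++ r).flatMap σ ++ [false] := by rw [hr a]
      _ = (ψ a).flatMap σ ++ (r.flatMap σ ++ [false]) := by
          simp [List.flatMap_append, List.append_assoc]
  · have e01 : M σ ψ false ++ M σ ψ true = (ψ false ++ ψ true).flatMap σ := by
      simp [M, List.flatMap_append]
    have e10 : M σ ψ true ++ M σ ψ false = (ψ true ++ ψ false).flatMap σ := by
      simp [M, List.flatMap_append]
    have key : ∀ x y : List Bool, ((r ++ x).flatMap σ = r.flatMap σ ++ x.flatMap σ) := by
      intro x y; simp [List.flatMap_append]
    rcases hp with ⟨hA, hB⟩ | ⟨hA, hB⟩ <;> rcases h2 with ⟨g1, g2⟩ | ⟨g1, g2⟩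
    · exact Or.inl ⟨by rw [e01, hA]; simp [List.flatMap_append, List.append_assoc, g1],
        by rw [e10, hB]; simp [List.flatMap_append, List.append_assoc, g2]⟩
    · exact Or.inr ⟨by rw [e01, hA]; simp [List.flatMap_append, List.append_assoc, g1],
        by rw [e10, hB]; simp [List.flatMap_append, List.append_assoc, g2]⟩
    · exact Or.inr ⟨by rw [e01, hA]; simp [List.flatMap_append, List.append_assoc, g2],
        by rw [e10, hB]; simp [List.flatMap_append, List.append_assoc, g1]⟩
    · exact Or.inl ⟨by rw [e01, hA]; simp [List.flatMap_append, List.append_assoc, g2],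
        by rw [e10, hB]; simp [List.flatMap_append, List.append_assoc, g1]⟩

lemma inv_compAll (l : List Bool) : PsiInv (compAll g13 l) := by
  induction l with
  | nil => exact inv_id
  | cons i l ih =>
    cases i
    · exact inv_step (by decide) (Or.inr ⟨rfl, rfl⟩) ih
    · exact inv_step (by decide) (Or.inl ⟨rfl, rfl⟩) ih

/-- For every `ψ` in the monoid `⟨ψ₁, ψ₃⟩`, the finite words
`01·ψ²(0)` and `10·ψ²(1)` are palindromes. -/
theorem palindrome_psi_sq (l : List Bool) :
    (([false, true] ++ ((compAll g13 l) false).flatMap (compAll g13 l)).Palindrome) ∧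
    (([true, false] ++ ((compAll g13 l) true).flatMap (compAll g13 l)).Palindrome) := by
  obtain ⟨r, hr, hp⟩ := inv_compAll l
  set ψ := compAll g13 l with hψ
  set R : List Bool := r.flatMap ψ ++ r with hR
  have hwr := wordRel hr
  -- reversal relation for θ = ψ² at a letter
  have hrel : ∀ a, R ++ ((ψ a).flatMap ψ).reverse = (ψ a).flatMap ψ ++ R := by
    intro a
    calc (r.flatMap ψ ++ r) ++ ((ψ a).flatMap ψ).reverse
        = r.flatMap ψ ++ (r ++ ((ψ a).flatMap ψ).reverse) := by
          simp [List.append_assoc]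
      _ = r.flatMap ψ ++ ((ψ a).reverse.flatMap ψ ++ r) := by rw [hwr (ψ a)]
      _ = (r ++ (ψ a).reverse).flatMap ψ ++ r := by
          simp [List.flatMap_append, List.append_assoc]
      _ = (ψ a ++ r).flatMap ψ ++ r := by rw [hr a]
      _ = (ψ a).flatMap ψ ++ (r.flatMap ψ ++ r) := by
          simp [List.flatMap_append, List.append_assoc]
  -- products for θ = ψ²
  have hprod01 : (ψ false).flatMap ψ ++ (ψ true).flatMap ψ = R ++ [false, true] := by
    have : (ψ false).flatMap ψ ++ (ψ true).flatMap ψ = (ψ false ++ ψ true).flatMap ψ := by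
      simp [List.flatMap_append]
    rcases hp with ⟨hA, _⟩ | ⟨hA, hB⟩
    · rw [this, hA]
      simp only [List.flatMap_append, hR, List.append_assoc]
      congr 1
      simpa using hA
    · rw [this, hA]
      simp only [List.flatMap_append, hR, List.append_assoc]
      congr 1
      simpa using hB
  have hprod10 : (ψ true).flatMap ψ ++ (ψ false).flatMap ψ = R ++ [true, false] := by
    have : (ψ true).flatMap ψ ++ (ψ false).flatMap ψ = (ψ true ++ ψ false).flatMap ψ := by
      simp [List.flatMap_append]
    rcases hp with ⟨hA, hB⟩ | ⟨hA, hB⟩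
    · rw [this, hB]
      simp only [List.flatMap_append, hR, List.append_assoc]
      congr 1
      simpa using hB
    · rw [this, hB]
      simp only [List.flatMap_append, hR, List.append_assoc]
      congr 1
      simpa using hA
  constructor
  · apply List.Palindrome.of_reverse_eq
    apply List.append_cancel_left (as := R)
    calc R ++ ([false, true] ++ (ψ false).flatMap ψ).reverse
        = (R ++ ((ψ false).flatMap ψ).reverse) ++ [true, false] := by
          simp [List.append_assoc]
      _ = ((ψ false).flatMap ψ ++ R) ++ [true, false] := by rw [hrel false]
      _ = (ψ false).flatMap ψ ++ (R ++ [true, false]) := by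
          simp [List.append_assoc]
      _ = (ψ false).flatMap ψ ++ ((ψ true).flatMap ψ ++ (ψ false).flatMap ψ) := by
          rw [hprod10]
      _ = ((ψ false).flatMap ψ ++ (ψ true).flatMap ψ) ++ (ψ false).flatMap ψ := by
          simp [List.append_assoc]
      _ = (R ++ [false, true]) ++ (ψ false).flatMap ψ := by rw [hprod01]
      _ = R ++ ([false, true] ++ (ψ false).flatMap ψ) := by
          simp [List.append_assoc]
  · apply List.Palindrome.of_reverse_eq
    apply List.append_cancel_left (as := R)
    calc R ++ ([true, false] ++ (ψ true).flatMap ψ).reverse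
        = (R ++ ((ψ true).flatMap ψ).reverse) ++ [false, true] := by
          simp [List.append_assoc]
      _ = ((ψ true).flatMap ψ ++ R) ++ [false, true] := by rw [hrel true]
      _ = (ψ true).flatMap ψ ++ (R ++ [false, true]) := by
          simp [List.append_assoc]
      _ = (ψ true).flatMap ψ ++ ((ψ false).flatMap ψ ++ (ψ true).flatMap ψ) := by
          rw [hprod01]
      _ = ((ψ true).flatMap ψ ++ (ψ false).flatMap ψ) ++ (ψ true).flatMap ψ := by
          simp [List.append_assoc]
      _ = (R ++ [true, false]) ++ (ψ true).flatMap ψ := by rw [hprod10]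
      _ = R ++ ([true, false] ++ (ψ true).flatMap ψ) := by
          simp [List.append_assoc]
end

section
/- For every morphism ψ in the monoid ⟨ψ₁,ψ₃⟩ and every n ≥ 1, the words 01·ψ^{2n}(0) and reverse(ψ^{2n}(0))·10 are equal, and the words 10·ψ^{2n}(1) and reverse(ψ^{2n}(1))·01 are equal (here ψ^{2n} denotes the 2n-fold composition of ψ with itself). -/
/-!
The identity `01·w = reverse(w)·10` says that `01·w` is a palindrome. Both generators `τ = ψ₁, ψ₃`
make every `τ(a)·0` a palindrome, so they map palindromes `u` to palindromes `τ(u)·0`; applied to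
`u = 01·w` (or `10·w`) and after stripping the outer letters `0`, this shows that `τ` carries the
identities for `w` over to `τ(w)`. The generator `ψ₃` keeps the prefixes `01`, `10` in place, while
`ψ₁` swaps them, so the identities hold for any `ψ ∈ ⟨ψ₁, ψ₃⟩` in which `ψ₁` occurs an even
number of times, in particular for every even power.
-/

open List

namespace List.Palindrome

variable {α β : Type*}

theorem of_cons_concat {a : α} {l : List α} (h : Palindrome (a :: (l ++ [a]))) :
    Palindrome l := by
  refine of_reverse_eq ?_
  simpa using h.reverse_eq

theorem flatMap_append_singleton {f : α → List β} {c : β} (hf : ∀ a, Palindrome (f a ++ [c]))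
    {u : List α} (hu : Palindrome u) : Palindrome (u.flatMap f ++ [c]) := by
  have conj : ∀ v : List α, c :: v.flatMap (reverse ∘ f) = v.flatMap f ++ [c] := by
    intro v
    induction v with
    | nil => rfl
    | cons a v ih =>
      have ha : c :: (f a).reverse = f a ++ [c] := by simpa using (hf a).reverse_eq
      rw [flatMap_cons, flatMap_cons, ← cons_append, Function.comp_apply, ha, append_assoc,
        singleton_append, ih, append_assoc]
  refine of_reverse_eq ?_
  rw [reverse_append, reverse_flatMap, reverse_singleton, singleton_append, conj, hu.reverse_eq]

theorem append_flatMap {f : α → List β} {c : β} (hf : ∀ a, Palindrome (f a ++ [c]))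
    {p w : List α} {q : List β} (hp : p.flatMap f = c :: q) (h : Palindrome (p ++ w)) :
    Palindrome (q ++ w.flatMap f) := by
  have := flatMap_append_singleton hf h
  rw [flatMap_append, hp] at this
  exact of_cons_concat (by simpa using this)

end List.Palindrome

theorem M_assoc (σ τ ρ : Morph) : M (M σ τ) ρ = M σ (M τ ρ) := by
  funext a
  simp only [M, flatMap_assoc]
  rfl

theorem idm_M (σ : Morph) : M idm σ = σ := by
  funext a
  exact flatMap_singleton' (σ a)

/-- `TwistPal false σ` is the pair of identities `01·σ(0) = reverse(σ(0))·10` and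
`10·σ(1) = reverse(σ(1))·01`; `TwistPal true σ` is the pair with `01` and `10` exchanged. -/
def TwistPal (b : Bool) (σ : Morph) : Prop :=
  ∀ a, Palindrome ([xor a b, !xor a b] ++ σ a)

theorem twistPal_idm : TwistPal false idm := by
  intro a
  cases a <;> exact Palindrome.of_reverse_eq rfl

namespace TwistPal

variable {b : Bool} {σ : Morph}

theorem M_psi3 (h : TwistPal b σ) : TwistPal b (M psi3 σ) := by
  intro a
  refine Palindrome.append_flatMap (c := false) (p := [xor a b, !xor a b]) ?_ ?_ (h a)
  · intro x
    cases x <;> exact Palindrome.of_reverse_eq rfl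
  · cases xor a b <;> rfl

theorem M_psi1 (h : TwistPal b σ) : TwistPal (!b) (M psi1 σ) := by
  intro a
  rw [Bool.xor_not]
  refine Palindrome.append_flatMap (c := false) (p := [xor a b, !xor a b]) ?_ ?_ (h a)
  · intro x
    cases x <;> exact Palindrome.of_reverse_eq rfl
  · cases xor a b <;> rfl

theorem compAll_g13 (l : List Bool) {τ : Morph} (h : TwistPal b τ) :
    TwistPal (xor b (l.count false).bodd) (M (compAll g13 l) τ) := by
  induction l with
  | nil => simpa [compAll, idm_M] using h
  | cons i l ih =>
    have hcomp : M (compAll g13 (i :: l)) τ = M (g13 i) (M (compAll g13 l) τ) :=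
      M_assoc _ _ _
    rw [hcomp]
    cases i
    · simpa [g13, count_cons, Nat.bodd_succ] using ih.M_psi1
    · simpa [g13, count_cons] using ih.M_psi3

theorem mpow_two_mul {c : Bool} (hσ : ∀ b τ, TwistPal b τ → TwistPal (xor b c) (M σ τ))
    (n : ℕ) : TwistPal false (mpow σ (2 * n)) := by
  induction n with
  | zero => exact twistPal_idm
  | succ n ih =>
    show TwistPal false (M σ (M σ (mpow σ (2 * n))))
    simpa using hσ _ _ (hσ _ _ ih)

end TwistPal

theorem psi_even_power_words_general (l : List Bool) (n : ℕ) :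
    [false, true] ++ (mpow (compAll g13 l) (2 * n)) false
        = ((mpow (compAll g13 l) (2 * n)) false).reverse ++ [true, false] ∧
    [true, false] ++ (mpow (compAll g13 l) (2 * n)) true
        = ((mpow (compAll g13 l) (2 * n)) true).reverse ++ [false, true] := by
  have h := TwistPal.mpow_two_mul (fun _ _ hτ => hτ.compAll_g13 l) n
  exact ⟨by simpa using (h false).reverse_eq.symm, by simpa using (h true).reverse_eq.symm⟩

/-- For every `ψ ∈ ⟨ψ₁, ψ₃⟩` and every `n ≥ 1`:
`01·ψ^{2n}(0) = reverse(ψ^{2n}(0))·10` and `10·ψ^{2n}(1) = reverse(ψ^{2n}(1))·01`. -/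
theorem psi_even_power_words (l : List Bool) (n : ℕ) (hn : 1 ≤ n) :
    [false, true] ++ (mpow (compAll g13 l) (2 * n)) false
        = ((mpow (compAll g13 l) (2 * n)) false).reverse ++ [true, false] ∧
    [true, false] ++ (mpow (compAll g13 l) (2 * n)) true
        = ((mpow (compAll g13 l) (2 * n)) true).reverse ++ [false, true] :=
  psi_even_power_words_general l n
end

section
/- Let α be an irrational real number with 0 < α < 1 and let γ ∈ ⟨ψ₁,ψ₃⟩ be a morphism that fixes the characteristic word c_α and whose word γ(0) ends in the letter 0. Let u be the word γ(0) with its last letter removed, and suppose Ψ is a morphism satisfying the conjugation relations γ(0)·u = u·Ψ(0) and γ(1)·u = u·Ψ(1). Then Ψ fixes the Sturmian word s_{α,0}. -/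
/-!
Write `u` for `γ(0)` without its final `0`. The conjugation relations extend to all words,
`γ(v)·u = u·Ψ(v)`, and since `γ` fixes `c_α`, the image `γ(v)·u` of a prefix `v` of `c_α`
is again a prefix of `c_α`. For `0 < α < 1` one has `s_{α,0} = 0·c_α`, so for a prefix `v` of
`c_α` the word `u·Ψ(0v) = γ(0)·γ(v)·u = u·0·(prefix of c_α)` is `u` followed by a prefix of
`s_{α,0}`; cancelling `u` shows that `Ψ` maps prefixes of `s_{α,0}` to prefixes of `s_{α,0}`.
-/

lemma wpref_length (w : ℕ → Bool) (n : ℕ) : (wpref w n).length = n := by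
  simp [wpref]

lemma wpref_add (w : ℕ → Bool) (n k : ℕ) :
    wpref w (n + k) = wpref w n ++ (List.range k).map (fun i => w (n + i)) := by
  simp [wpref, List.range_add, List.map_map, Function.comp_def]

lemma wpref_succ_of_shift {w w' : ℕ → Bool} {x : Bool} (h0 : w' 0 = x)
    (hsucc : ∀ n, w' (n + 1) = w n) (n : ℕ) : wpref w' (n + 1) = x :: wpref w n := by
  simp [wpref, List.range_succ_eq_map, h0, hsucc]

lemma eq_wpref_length_of_prefix {w : ℕ → Bool} {x : List Bool} {m : ℕ}
    (h : x <+: wpref w m) : x = wpref w x.length := by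
  have hlen : x.length ≤ m := by simpa [wpref_length] using h.length_le
  rw [List.prefix_iff_eq_take.mp h]
  simp [wpref, ← List.map_take, List.take_range, hlen]

lemma compAll_g13_ne_nil (l : List Bool) (a : Bool) : compAll g13 l a ≠ [] := by
  induction l generalizing a with
  | nil => simp [compAll, idm]
  | cons i t ih =>
    obtain ⟨b, hb⟩ := List.exists_mem_of_ne_nil _ (ih a)
    simp only [compAll, List.foldr_cons, M, ne_eq, List.flatMap_eq_nil_iff, not_forall]
    exact ⟨b, hb, by cases i <;> cases b <;> simp [g13, psi1, psi3]⟩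

section Conjugation

variable {α β : Type*} {σ τ : α → List β} {u : List β}

lemma flatMap_append_eq_append_flatMap (hconj : ∀ a, σ a ++ u = u ++ τ a) (v : List α) :
    v.flatMap σ ++ u = u ++ v.flatMap τ := by
  induction v with
  | nil => simp
  | cons a t ih =>
    rw [List.flatMap_cons, List.flatMap_cons, List.append_assoc, ih, ← List.append_assoc,
      hconj, List.append_assoc]

lemma length_le_length_flatMap (hne : ∀ a, σ a ≠ []) (v : List α) :
    v.length ≤ (v.flatMap σ).length := by
  induction v with
  | nil => simp
  | cons a t ih =>
    have := List.length_pos_iff.mpr (hne a)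
    simp only [List.flatMap_cons, List.length_append, List.length_cons]
    omega

lemma prefix_flatMap_of_conj (hne : ∀ a, σ a ≠ []) (hconj : ∀ a, σ a ++ u = u ++ τ a)
    {v : List α} (hlen : u.length ≤ v.length) : u <+: v.flatMap σ :=
  List.prefix_of_prefix_length_le ⟨_, (flatMap_append_eq_append_flatMap hconj v).symm⟩
    (List.prefix_append _ u) (hlen.trans (length_le_length_flatMap hne v))

end Conjugation

section Fixes

variable {σ τ : Morph} {u : List Bool} {w : ℕ → Bool}

lemma Fixes.flatMap_wpref_append_eq (hσ : Fixes σ w) (hne : ∀ a, σ a ≠ [])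
    (hconj : ∀ a, σ a ++ u = u ++ τ a) (n : ℕ) :
    (wpref w n).flatMap σ ++ u = wpref w ((wpref w n).flatMap σ ++ u).length := by
  set seg := (List.range u.length).map (fun i => w (n + i))
  have hu : u <+: seg.flatMap σ := prefix_flatMap_of_conj hne hconj (by simp [seg])
  have himage := hσ (n + u.length)
  rw [wpref_add, List.flatMap_append] at himage
  apply eq_wpref_length_of_prefix
  rw [← himage]
  exact (List.prefix_append_right_inj _).mpr hu

/-- If `σ(x) = u·x`, the conjugate `τ = u⁻¹σu` fixes the word `x·w`. -/
theorem Fixes.of_conj {w' : ℕ → Bool} {x : Bool} (hσ : Fixes σ w) (hne : ∀ a, σ a ≠ [])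
    (hconj : ∀ a, σ a ++ u = u ++ τ a) (hx : σ x = u ++ [x]) (h0 : w' 0 = x)
    (hsucc : ∀ n, w' (n + 1) = w n) : Fixes τ w' := by
  rintro (_ | n)
  · simp [wpref]
  rw [wpref_succ_of_shift h0 hsucc]
  have key : u ++ (x :: wpref w n).flatMap τ
      = u ++ wpref w' (((wpref w n).flatMap σ ++ u).length + 1) := by
    rw [← flatMap_append_eq_append_flatMap hconj, List.flatMap_cons, List.append_assoc,
      hσ.flatMap_wpref_append_eq hne hconj, hx, List.append_assoc, List.singleton_append,
      ← wpref_succ_of_shift h0 hsucc, wpref_length]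
  rw [List.append_cancel_left key, wpref_length]

end Fixes

lemma sw_zero_zero {α : ℝ} (h0 : 0 < α) (h1 : α < 1) : sw α 0 0 = false := by
  have : ⌊α⌋ = 0 := Int.floor_eq_zero_iff.mpr ⟨h0.le, h1⟩
  simp [sw, sfl, this]

lemma sw_zero_succ (α : ℝ) (n : ℕ) : sw α 0 (n + 1) = cw α n := by
  have : sfl α 0 (n + 1) = sfl α α n := by
    unfold sfl
    congr 2 <;> push_cast <;> ring
  simp [sw, cw, this]

theorem conjugate_fixes_s_alpha_zero_general (α : ℝ)
    (h0 : 0 < α) (h1 : α < 1)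
    (γ : Morph) (hmem : ∃ l : List Bool, γ = compAll g13 l)
    (hfix : Fixes γ (cw α)) (hlast : (γ false).getLast? = some false)
    (Ψ : Morph)
    (hconj : ∀ a : Bool, γ a ++ (γ false).dropLast = (γ false).dropLast ++ Ψ a) :
    Fixes Ψ (sw α 0) := by
  have hne : ∀ a, γ a ≠ [] := by
    obtain ⟨l, rfl⟩ := hmem
    exact compAll_g13_ne_nil l
  have hγ0 : γ false = (γ false).dropLast ++ [false] :=
    (List.dropLast_append_getLast? _ hlast).symm
  exact hfix.of_conj hne hconj hγ0 (sw_zero_zero h0 h1) (sw_zero_succ α)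

/-- Let `γ ∈ ⟨ψ₁, ψ₃⟩` fix `c_α` (`α` irrational in `(0,1)`)
with `γ(0)` ending in `0`, let `u` be `γ(0)` with its last letter removed, and
let `Ψ` satisfy the conjugation relations `γ(a)·u = u·Ψ(a)`. Then `Ψ` fixes
`s_{α,0}`. -/
theorem conjugate_fixes_s_alpha_zero (α : ℝ) (hirr : Irrational α)
    (h0 : 0 < α) (h1 : α < 1)
    (γ : Morph) (hmem : ∃ l : List Bool, γ = compAll g13 l)
    (hfix : Fixes γ (cw α)) (hlast : (γ false).getLast? = some false)
    (Ψ : Morph)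
    (hconj : ∀ a : Bool, γ a ++ (γ false).dropLast = (γ false).dropLast ++ Ψ a) :
    Fixes Ψ (sw α 0) :=
  conjugate_fixes_s_alpha_zero_general α h0 h1 γ hmem hfix hlast Ψ hconj
end

section
/- Let γ, δ ∈ ⟨ψ₁,ψ₃⟩ be morphisms such that γ(0) and δ(0) both end in the letter 0. Let u_γ, u_δ and u_{γδ} denote γ(0), δ(0) and (γ∘δ)(0) with their last letter removed, and suppose Ψ_γ, Ψ_δ and Ψ_{γδ} are morphisms satisfying the conjugation relations γ(a)·u_γ = u_γ·Ψ_γ(a), δ(a)·u_δ = u_δ·Ψ_δ(a), and (γ∘δ)(a)·u_{γδ} = u_{γδ}·Ψ_{γδ}(a) for both letters a ∈ {0,1}. Then Ψ_{γδ} = Ψ_γ∘Ψ_δ. -/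
/-!
Since `δ(0) = u_δ 0`, removing the last letter of `(γ ∘ δ)(0) = γ(u_δ) γ(0)` leaves
`u_{γδ} = γ(u_δ) u_γ`. Pushing `δ(a) u_δ = u_δ Ψ_δ(a)`
through `γ` and then moving `u_γ` across `γ(Ψ_δ(a))` letter by letter gives
`(γ ∘ δ)(a) · γ(u_δ) u_γ = γ(u_δ) u_γ · Ψ_γ(Ψ_δ(a))`, and a conjugate with a given prefix is
unique by left cancellation.
-/

def Conj (u : List Bool) (σ Ψ : Morph) : Prop :=
  ∀ a : Bool, σ a ++ u = u ++ Ψ a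

namespace Conj

variable {u v : List Bool} {σ τ Ψ Φ : Morph}

theorem flatMap (h : Conj u σ Ψ) (w : List Bool) : w.flatMap σ ++ u = u ++ w.flatMap Ψ := by
  induction w with
  | nil => simp
  | cons b w ih =>
    calc (b :: w).flatMap σ ++ u = σ b ++ (w.flatMap σ ++ u) := by simp
      _ = (σ b ++ u) ++ w.flatMap Ψ := by rw [ih, List.append_assoc]
      _ = u ++ (b :: w).flatMap Ψ := by rw [h b]; simp

theorem comp (hσ : Conj u σ Ψ) (hτ : Conj v τ Φ) :
    Conj (v.flatMap σ ++ u) (M σ τ) (M Ψ Φ) := fun a =>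
  calc (τ a).flatMap σ ++ (v.flatMap σ ++ u) = (τ a ++ v).flatMap σ ++ u := by simp
    _ = v.flatMap σ ++ ((Φ a).flatMap σ ++ u) := by rw [hτ a]; simp
    _ = (v.flatMap σ ++ u) ++ (Φ a).flatMap Ψ := by rw [hσ.flatMap]; simp

theorem unique (h : Conj u σ Ψ) (h' : Conj u σ Φ) : Ψ = Φ :=
  funext fun a => List.append_cancel_left ((h a).symm.trans (h' a))

end Conj

theorem List.dropLast_flatMap_of_getLast? {α β : Type*} {w : List α} {c : α} {f : α → List β}
    (hw : w.getLast? = some c) (hc : f c ≠ []) :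
    (w.flatMap f).dropLast = w.dropLast.flatMap f ++ (f c).dropLast := by
  conv_lhs => rw [← List.dropLast_append_getLast? c hw]
  rw [List.flatMap_append, List.flatMap_singleton, List.dropLast_append_of_ne_nil hc]

theorem conjugate_multiplicative_general (γ δ : Morph)
    (hγ0 : (γ false).getLast? = some false)
    (hδ0 : (δ false).getLast? = some false)
    (Ψγ Ψδ Ψγδ : Morph)
    (hcγ : ∀ a : Bool, γ a ++ (γ false).dropLast = (γ false).dropLast ++ Ψγ a)
    (hcδ : ∀ a : Bool, δ a ++ (δ false).dropLast = (δ false).dropLast ++ Ψδ a)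
    (hcγδ : ∀ a : Bool,
      (M γ δ) a ++ ((M γ δ) false).dropLast = ((M γ δ) false).dropLast ++ Ψγδ a) :
    Ψγδ = M Ψγ Ψδ := by
  have hγne : γ false ≠ [] := by
    rintro h
    simp [h] at hγ0
  have hprefix : ((M γ δ) false).dropLast = (δ false).dropLast.flatMap γ ++ (γ false).dropLast :=
    List.dropLast_flatMap_of_getLast? hδ0 hγne
  have hγδ : Conj ((δ false).dropLast.flatMap γ ++ (γ false).dropLast) (M γ δ) Ψγδ := by
    rw [← hprefix]
    exact hcγδ
  exact hγδ.unique (Conj.comp hcγ hcδ)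

/-- For `γ, δ ∈ ⟨ψ₁, ψ₃⟩` with `γ(0)`, `δ(0)` ending in `0`,
the conjugate morphisms satisfy `Ψ_{γδ} = Ψ_γ ∘ Ψ_δ`. -/
theorem conjugate_multiplicative (γ δ : Morph)
    (hγmem : ∃ l : List Bool, γ = compAll g13 l)
    (hδmem : ∃ l : List Bool, δ = compAll g13 l)
    (hγ0 : (γ false).getLast? = some false)
    (hδ0 : (δ false).getLast? = some false)
    (Ψγ Ψδ Ψγδ : Morph)
    (hcγ : ∀ a : Bool, γ a ++ (γ false).dropLast = (γ false).dropLast ++ Ψγ a)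
    (hcδ : ∀ a : Bool, δ a ++ (δ false).dropLast = (δ false).dropLast ++ Ψδ a)
    (hcγδ : ∀ a : Bool,
      (M γ δ) a ++ ((M γ δ) false).dropLast = ((M γ δ) false).dropLast ++ Ψγδ a) :
    Ψγδ = M Ψγ Ψδ :=
  conjugate_multiplicative_general γ δ hγ0 hδ0 Ψγ Ψδ Ψγδ hcγ hcδ hcγδ
end

section
/- For every n ≥ 0, the morphism γ = ψ₁∘ψ₃ⁿ∘ψ₁ satisfies γ(0) = (01)^{n+1}·0 and γ(1) = 01, the morphism ψ₃∘ψ₈^{n+1} satisfies (ψ₃∘ψ₈^{n+1})(0) = 0·(01)^{n+1} and (ψ₃∘ψ₈^{n+1})(1) = 01, and consequently for every finite binary word w, γ(w)·(01)^{n+1} = (01)^{n+1}·(ψ₃∘ψ₈^{n+1})(w); i.e., the conjugate of ψ₁∘ψ₃ⁿ∘ψ₁ by the word (01)^{n+1} is ψ₃∘ψ₈^{n+1}. -/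
lemma flatten_rep_singleton {α : Type*} (k : ℕ) (a : α) :
    (List.replicate k [a]).flatten = List.replicate k a := by
  induction k <;> simp_all [List.replicate_succ]

lemma mpow3_false (n : ℕ) : mpow psi3 n false = [false] := by
  induction n with
  | zero => rfl
  | succ k ih => simp [mpow, M, ih, psi3]

lemma mpow3_true (n : ℕ) : mpow psi3 n true = List.replicate n false ++ [true] := by
  induction n with
  | zero => rfl
  | succ k ih =>
    simp only [mpow, M, ih, List.flatMap_append, List.flatMap_replicate, psi3,
      List.flatMap_cons, List.flatMap_nil, List.append_nil]
    rw [flatten_rep_singleton,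
      show ([false, true] : List Bool) = [false] ++ [true] from rfl,
      ← List.append_assoc, ← List.replicate_succ', List.replicate_succ,
      List.cons_append]

lemma mpow8_true (n : ℕ) : mpow psi8 n true = [true] := by
  induction n with
  | zero => rfl
  | succ k ih => simp [mpow, M, ih, psi8]

lemma mpow8_false (n : ℕ) : mpow psi8 n false = false :: List.replicate n true := by
  induction n with
  | zero => rfl
  | succ k ih =>
    simp [mpow, M, ih, psi8, List.flatMap_cons, List.flatMap_replicate,
      List.replicate_succ]

lemma flatMap_psi1_rep (k : ℕ) :
    (List.replicate k false ++ [true]).flatMap psi1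
      = (List.replicate k ([false, true] : List Bool)).flatten ++ [false] := by
  induction k with
  | zero => rfl
  | succ m ih => simp_all [List.replicate_succ, psi1]

lemma flatMap_psi3_rep (k : ℕ) :
    (false :: List.replicate k true).flatMap psi3
      = false :: (List.replicate k ([false, true] : List Bool)).flatten := by
  induction k with
  | zero => rfl
  | succ m ih => simp_all [List.replicate_succ, psi3]

lemma comm_rep (k : ℕ) :
    (List.replicate k ([false, true] : List Bool)).flatten ++ [false, true]
      = false :: true :: (List.replicate k ([false, true] : List Bool)).flatten := by
  induction k with
  | zero => rfl
  | succ m ih => simp_all [List.replicate_succ]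

/-- For every `n ≥ 0`, with `γ = ψ₁ ∘ ψ₃ⁿ ∘ ψ₁`:
`γ(0) = (01)^{n+1}·0`, `γ(1) = 01`, `(ψ₃ ∘ ψ₈^{n+1})(0) = 0·(01)^{n+1}`,
`(ψ₃ ∘ ψ₈^{n+1})(1) = 01`, and for every finite binary word `w`,
`γ(w)·(01)^{n+1} = (01)^{n+1}·(ψ₃ ∘ ψ₈^{n+1})(w)`. -/
theorem conjugate_of_psi1_psi3_psi1 (n : ℕ) :
    (M psi1 (M (mpow psi3 n) psi1)) false
        = (List.replicate (n + 1) ([false, true] : List Bool)).flatten ++ [false] ∧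
    (M psi1 (M (mpow psi3 n) psi1)) true = [false, true] ∧
    (M psi3 (mpow psi8 (n + 1))) false
        = false :: (List.replicate (n + 1) ([false, true] : List Bool)).flatten ∧
    (M psi3 (mpow psi8 (n + 1))) true = [false, true] ∧
    ∀ w : List Bool,
      w.flatMap (M psi1 (M (mpow psi3 n) psi1))
          ++ (List.replicate (n + 1) ([false, true] : List Bool)).flatten
        = (List.replicate (n + 1) ([false, true] : List Bool)).flatten
          ++ w.flatMap (M psi3 (mpow psi8 (n + 1))) := by
  have h0 : (M psi1 (M (mpow psi3 n) psi1)) false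
      = (List.replicate (n + 1) ([false, true] : List Bool)).flatten ++ [false] := by
    show (((psi1 false).flatMap (mpow psi3 n)).flatMap psi1) = _
    simp only [psi1, List.flatMap_cons, List.flatMap_nil, mpow3_false, mpow3_true,
      List.append_nil]
    have : ([false] ++ (List.replicate n false ++ [true]) : List Bool)
        = List.replicate (n + 1) false ++ [true] := by
      simp [List.replicate_succ]
    rw [show (([false] ++ (List.replicate n false ++ [true])) : List Bool)
        = List.replicate (n + 1) false ++ [true] from this, flatMap_psi1_rep]
  have h1 : (M psi1 (M (mpow psi3 n) psi1)) true = [false, true] := by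
    show (((psi1 true).flatMap (mpow psi3 n)).flatMap psi1) = _
    simp [psi1, mpow3_false]
  have h2 : (M psi3 (mpow psi8 (n + 1))) false
      = false :: (List.replicate (n + 1) ([false, true] : List Bool)).flatten := by
    show ((mpow psi8 (n + 1)) false).flatMap psi3 = _
    rw [mpow8_false, flatMap_psi3_rep]
  have h3 : (M psi3 (mpow psi8 (n + 1))) true = [false, true] := by
    show ((mpow psi8 (n + 1)) true).flatMap psi3 = _
    rw [mpow8_true]; rfl
  refine ⟨h0, h1, h2, h3, ?_⟩
  intro w
  induction w with
  | nil => simp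
  | cons a t ih =>
    cases a <;>
      simp only [List.flatMap_cons, List.append_assoc, ih, h0, h1, h2, h3] <;>
      rw [← List.append_assoc, ← List.append_assoc]
    · have : ((List.replicate (n + 1) ([false, true] : List Bool)).flatten ++ [false])
          ++ (List.replicate (n + 1) ([false, true] : List Bool)).flatten
          = (List.replicate (n + 1) ([false, true] : List Bool)).flatten
            ++ (false :: (List.replicate (n + 1) ([false, true] : List Bool)).flatten) := by
        simp
      rw [this, List.append_assoc]
    · rw [show (([false, true] : List Bool)
          ++ (List.replicate (n + 1) ([false, true] : List Bool)).flatten)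
          = (List.replicate (n + 1) ([false, true] : List Bool)).flatten
            ++ [false, true] from (comm_rep (n + 1)).symm, List.append_assoc]
end

section
/- Let γ ∈ ⟨ψ₁,ψ₃⟩ be a morphism such that γ(0) ends in the letter 0 and γ(1) ends in the letter 1. Let u be γ(0) with its last letter removed, and let Ψ be a morphism satisfying γ(a)·u = u·Ψ(a) for both letters a ∈ {0,1}. Let E be the exchange morphism (E(0) = 1, E(1) = 0), let u' be (E∘γ∘E)(0) with its last letter removed, and let Ψ' be a morphism satisfying (E∘γ∘E)(a)·u' = u'·Ψ'(a) for both letters a ∈ {0,1}. Then Ψ' = E∘Ψ̃∘E, where Ψ̃ is the time reversal of Ψ, i.e., the morphism with Ψ̃(0) = reverse(Ψ(0)) and Ψ̃(1) = reverse(Ψ(1)). -/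
/-!
Every `γ ∈ ⟨ψ₁, ψ₃⟩` is a standard pair around a palindrome: `γ(0)γ(1) = w x x̄` and
`γ(1)γ(0) = w x̄ x` with `w` a palindrome, because each generator `σ` has `σ(a)0` a
palindrome for both letters, so `w ↦ σ(w)0` preserves palindromes. When `γ(0) = u0` and
`γ(1) = v1`, comparing the two products gives `w = u ṽ = v ũ` (tilde is reversal). Hence
`Ψ(0) = 0u`, `Ψ(1) = ṽ1`, and `Ψ̃` is exactly the conjugate of `γ` by `v`; conjugating the
whole relation by `E` turns `v` into `(EγE)(0)` minus its last letter.
-/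

theorem reverse_flatMap_append_singleton {α β : Type*} {σ : α → List β} {c : β}
    (hσ : ∀ a, (σ a ++ [c]).reverse = σ a ++ [c]) (x : List α) :
    (x.flatMap σ ++ [c]).reverse = x.reverse.flatMap σ ++ [c] := by
  induction x with
  | nil => rfl
  | cons a l ih =>
    calc ((a :: l).flatMap σ ++ [c]).reverse
        = (l.flatMap σ ++ [c]).reverse ++ (σ a).reverse := by simp
      _ = l.reverse.flatMap σ ++ (σ a ++ [c]).reverse := by rw [ih]; simp
      _ = (a :: l).reverse.flatMap σ ++ [c] := by rw [hσ]; simp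

theorem eq_append_reverse_of_palindrome {α : Type*} {w u v : List α} (hw : w.reverse = w)
    (hu : u <+: w) (hv : v <+: w) (hlen : w.length = v.length + u.length) :
    w = v ++ u.reverse := by
  obtain ⟨t, rfl⟩ := hv
  have hsuf : u.reverse <:+ v ++ t := by
    rw [← List.reverse_prefix, List.reverse_reverse, hw]
    exact hu
  have ht : u.reverse <:+ t :=
    List.suffix_of_suffix_length_le hsuf (List.suffix_append v t) (by simp only [List.length_append, List.length_reverse] at hlen ⊢; omega)
  rw [ht.eq_of_length (by simp only [List.length_append, List.length_reverse] at hlen ⊢; omega)]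

theorem g13_append_false_palindrome :
    ∀ i a, (g13 i a ++ [false]).reverse = g13 i a ++ [false] := by
  decide

theorem g13_append_g13_not :
    ∀ i x, ∃ y, g13 i x ++ g13 i (!x) = [false, y, !y] ∧
      g13 i (!x) ++ g13 i x = [false, !y, y] := by
  decide

theorem exists_palindrome_compAll_g13 (l : List Bool) :
    ∃ w : List Bool, w.reverse = w ∧ ∃ x : Bool,
      compAll g13 l false ++ compAll g13 l true = w ++ [x, !x] ∧
      compAll g13 l true ++ compAll g13 l false = w ++ [!x, x] := by
  induction l with
  | nil => exact ⟨[], rfl, false, rfl, rfl⟩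
  | cons i l ih =>
    obtain ⟨w, hw, x, h01, h10⟩ := ih
    obtain ⟨y, hy, hy'⟩ := g13_append_g13_not i x
    have hcomp : ∀ a b, compAll g13 (i :: l) a ++ compAll g13 (i :: l) b
        = (compAll g13 l a ++ compAll g13 l b).flatMap (g13 i) :=
      fun a b => List.flatMap_append.symm
    refine ⟨w.flatMap (g13 i) ++ [false], ?_, y, ?_, ?_⟩
    · rw [reverse_flatMap_append_singleton (g13_append_false_palindrome i), hw]
    · rw [hcomp, h01]
      simp [hy]
    · rw [hcomp, h10]
      simp [hy']

theorem append_conj_trev_of_palindrome {γ Ψ : Morph} {u v w : List Bool} (hw : w.reverse = w)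
    (hu : γ false = u ++ [false]) (hv : γ true = v ++ [true])
    (h01 : γ false ++ γ true = w ++ [false, true]) (h10 : γ true ++ γ false = w ++ [true, false])
    (hconj : ∀ a, γ a ++ u = u ++ Ψ a) (a : Bool) :
    γ a ++ v = v ++ trev Ψ a := by
  rw [hu, hv] at h01 h10
  have huv : u ++ false :: v = w ++ [false] :=
    List.append_cancel_right (bs := [true]) (by simpa using h01)
  have hvu : v ++ true :: u = w ++ [true] :=
    List.append_cancel_right (bs := [false]) (by simpa using h10)
  have hlen : w.length = u.length + v.length := by
    have := congrArg List.length huv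
    simp only [List.length_append, List.length_cons, List.length_nil] at this
    omega
  have hu_pre : u <+: w := List.prefix_of_prefix_length_le
    (huv ▸ List.prefix_append u _) (List.prefix_append w _) (by omega)
  have hv_pre : v <+: w := List.prefix_of_prefix_length_le
    (hvu ▸ List.prefix_append v _) (List.prefix_append w _) (by omega)
  have hw_vu : w = v ++ u.reverse := eq_append_reverse_of_palindrome hw hu_pre hv_pre (by omega)
  have hw_uv : w = u ++ v.reverse := eq_append_reverse_of_palindrome hw hv_pre hu_pre (by omega)
  cases a
  · have hΨ : Ψ false = false :: u := by simpa [hu] using (hconj false).symm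
    rw [hu, trev, hΨ]
    simpa [hw_vu] using huv
  · have hΨ : Ψ true = v.reverse ++ [true] := by
      simpa [hv, hvu, hw_uv] using (hconj true).symm
    simp [hv, trev, hΨ]

theorem Em_conj_apply (σ : Morph) (a : Bool) : M Em (M σ Em) a = (σ (!a)).map not := by
  simp only [M, Em, List.flatMap_singleton, List.map_eq_flatMap]
  rfl

theorem Em_conj_append_conj {σ τ : Morph} {p : List Bool} (h : ∀ a, σ a ++ p = p ++ τ a)
    (a : Bool) : M Em (M σ Em) a ++ p.map not = p.map not ++ M Em (M τ Em) a := by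
  simp only [Em_conj_apply, ← List.map_append, h]

/-- Let `γ ∈ ⟨ψ₁, ψ₃⟩` with `γ(0)` ending in `0` and `γ(1)`
ending in `1`, and let `Ψ` be its conjugate (by `u = γ(0)` minus its last
letter). Let `Ψ'` be the analogous conjugate of `E ∘ γ ∘ E`. Then
`Ψ' = E ∘ Ψ̃ ∘ E`, where `Ψ̃` is the time reversal of `Ψ`. -/
theorem conjugate_of_EγE (γ : Morph) (hmem : ∃ l : List Bool, γ = compAll g13 l)
    (h0 : (γ false).getLast? = some false) (h1 : (γ true).getLast? = some true)
    (Ψ : Morph)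
    (hconj : ∀ a : Bool, γ a ++ (γ false).dropLast = (γ false).dropLast ++ Ψ a)
    (Ψ' : Morph)
    (hconj' : ∀ a : Bool,
      (M Em (M γ Em)) a ++ ((M Em (M γ Em)) false).dropLast
        = ((M Em (M γ Em)) false).dropLast ++ Ψ' a) :
    Ψ' = M Em (M (trev Ψ) Em) := by
  obtain ⟨l, rfl⟩ := hmem
  obtain ⟨u, hu⟩ := List.getLast?_eq_some_iff.1 h0
  obtain ⟨v, hv⟩ := List.getLast?_eq_some_iff.1 h1
  obtain ⟨w, hw, x, h01, h10⟩ := exists_palindrome_compAll_g13 l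
  obtain rfl : x = false := by simpa [hv] using congrArg List.getLast? h01
  have hΨ := append_conj_trev_of_palindrome hw hu hv h01 h10 (by simpa [hu] using hconj)
  have hu' : (M Em (M (compAll g13 l) Em) false).dropLast = v.map not := by
    simp [Em_conj_apply, hv]
  funext a
  rw [hu'] at hconj'
  exact List.append_cancel_left ((hconj' a).symm.trans (Em_conj_append_conj hΨ a))
end
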